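/- arXiv:2009.06350 — 2 statements merged into one kernel-verified Lean document; each statement's English description precedes it below -/
import Mathlib

section
/- Let A(ε) be the N×N matrix (N ≥ 2) with entries a_{ij} = z_i/N − ε/(N−1) for j ≤ N−1 and a_{iN} = z_i/N + ε, where the row sums z_i satisfy 0 ≤ z_i and ∑_i z_i < N, and ε is small enough that I − A(ε) is invertible. Then for 1 ≤ ℓ ≤ N, the ℓ-th component of (I − A(ε))⁻¹ 1 equals −(N−1)(N z_ℓ + N − z̃ − z_N) / [(N−1)(−N + z̃ + z_N) − N ε (−N z_N + z̃ + z_N)], where z̃ = ∑_{i=1}^{N−1} z_i. -/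
open Matrix Finset

/-! Write `A = z pᵀ + 𝟙 qᵀ` with `p = 𝟙 / N` and `q` the column offsets, so that `p ⬝ 𝟙 = 1` and
`q ⬝ 𝟙 = 0`. Then `(I - A) x = 𝟙` says `x = 𝟙 + α z + β 𝟙` with `α = p ⬝ x`, `β = q ⬝ x`; dotting this
with `p` and `q` gives `β = α (q ⬝ z)` and `α (1 - p ⬝ z - q ⬝ z) = 1`, which yields `x` in closed form.
As `x` exists when `I - A` is invertible, the last equation also shows that the denominator is nonzero. -/

section

variable {n : Type*} [Fintype n] [DecidableEq n]

theorem eq_one_add_smul_of_one_sub_mulVec_eq_one {R : Type*} [CommRing R] {A : Matrix n n R}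
    {u p q x : n → R} (hA : ∀ i j, A i j = u i * p j + q j) (hx : (1 - A) *ᵥ x = 1) :
    x = 1 + (p ⬝ᵥ x) • u + (q ⬝ᵥ x) • 1 := by
  have hAx : A *ᵥ x = (p ⬝ᵥ x) • u + (q ⬝ᵥ x) • 1 := by
    ext i
    simp only [mulVec, dotProduct, hA, add_mul, sum_add_distrib, sum_mul, Pi.add_apply,
      Pi.smul_apply, smul_eq_mul, Pi.one_apply, mul_one]
    exact congrArg (· + _) (sum_congr rfl fun j _ => by ring)
  rwa [sub_mulVec, one_mulVec, sub_eq_iff_eq_add, hAx, ← add_assoc] at hx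

theorem apply_eq_div_of_one_sub_mulVec_eq_one {K : Type*} [Field K] {A : Matrix n n K} {u p q x : n → K}
    (hA : ∀ i j, A i j = u i * p j + q j) (hp : p ⬝ᵥ 1 = 1) (hq : q ⬝ᵥ 1 = 0)
    (hx : (1 - A) *ᵥ x = 1) (ℓ : n) :
    x ℓ = (1 - p ⬝ᵥ u + u ℓ) / (1 - p ⬝ᵥ u - q ⬝ᵥ u) := by
  have hfix := eq_one_add_smul_of_one_sub_mulVec_eq_one hA hx
  have hp' : p ⬝ᵥ x = 1 + (p ⬝ᵥ x) * (p ⬝ᵥ u) + q ⬝ᵥ x := by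
    conv_lhs => rw [hfix]
    simp only [dotProduct_add, dotProduct_smul, smul_eq_mul, hp, mul_one]
  have hq' : q ⬝ᵥ x = (p ⬝ᵥ x) * (q ⬝ᵥ u) := by
    conv_lhs => rw [hfix]
    simp only [dotProduct_add, dotProduct_smul, smul_eq_mul, hq, mul_zero, add_zero, zero_add]
  have hℓ : x ℓ = 1 + (p ⬝ᵥ x) * u ℓ + q ⬝ᵥ x := by
    simpa only [Pi.add_apply, Pi.smul_apply, smul_eq_mul, Pi.one_apply, mul_one]
      using congrFun hfix ℓ
  have key : (p ⬝ᵥ x) * (1 - p ⬝ᵥ u - q ⬝ᵥ u) = 1 := by linear_combination hp' + hq'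
  rw [eq_div_iff (right_ne_zero_of_mul_eq_one key), hℓ]
  linear_combination (u ℓ + q ⬝ᵥ u) * key + (1 - p ⬝ᵥ u - q ⬝ᵥ u) * hq'

end

theorem sum_ite_val_eq_mul {R : Type*} [CommRing R] {N k : ℕ} (hk : k < N) (a b : R)
    (v : Fin N → R) :
    ∑ j : Fin N, (if (j : ℕ) = k then a else b) * v j = b * ∑ j, v j + (a - b) * v ⟨k, hk⟩ := by
  have hsplit : ∀ j : Fin N, (if (j : ℕ) = k then a else b) * v j
      = b * v j + if j = ⟨k, hk⟩ then (a - b) * v j else 0 := by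
    intro j
    by_cases h : (j : ℕ) = k
    · rw [if_pos h, if_pos (Fin.ext h)]; ring
    · rw [if_neg h, if_neg (fun e => h (congrArg Fin.val e))]; ring
  simp_rw [hsplit]
  rw [sum_add_distrib, ← mul_sum, sum_ite_eq']
  simp

theorem stmt_10 (N : ℕ) (hN : 2 ≤ N) (z : Fin N → ℝ) (ε : ℝ)
    (A : Matrix (Fin N) (Fin N) ℝ)
    (hA : ∀ i j, A i j =
      if (j : ℕ) = N - 1 then z i / N + ε else z i / N - ε / ((N : ℝ) - 1))
    (hinv : IsUnit (1 - A).det)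
    (zN ztilde : ℝ) (hzN : zN = z ⟨N - 1, by omega⟩)
    (hzt : ztilde = (∑ i, z i) - zN) :
    ∀ ℓ : Fin N,
      ((1 - A)⁻¹).mulVec (fun _ => (1 : ℝ)) ℓ
        = -(((N : ℝ) - 1) * ((N : ℝ) * z ℓ + N - ztilde - zN)) /
            (((N : ℝ) - 1) * (-(N : ℝ) + ztilde + zN)
              - (N : ℝ) * ε * (-(N : ℝ) * zN + ztilde + zN)) := by
  intro ℓ
  have hNR : (2 : ℝ) ≤ N := by exact_mod_cast hN
  have hlast : N - 1 < N := by omega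
  set p : Fin N → ℝ := fun _ => (N : ℝ)⁻¹
  set q : Fin N → ℝ := fun j => if (j : ℕ) = N - 1 then ε else -ε / ((N : ℝ) - 1)
  have hp : ∀ v, p ⬝ᵥ v = (N : ℝ)⁻¹ * ∑ j, v j := fun v => by simp [p, dotProduct, mul_sum]
  have hq : ∀ v, q ⬝ᵥ v = -ε / ((N : ℝ) - 1) * ∑ j, v j
      + (ε - -ε / ((N : ℝ) - 1)) * v ⟨N - 1, hlast⟩ := fun v => sum_ite_val_eq_mul hlast _ _ v
  have hApq : ∀ i j, A i j = z i * p j + q j := fun i j => by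
    rw [hA]; simp only [p, q]; split_ifs <;> ring
  have hx : (1 - A) *ᵥ ((1 - A)⁻¹ *ᵥ 1) = 1 := by
    rw [mulVec_mulVec, mul_nonsing_inv _ hinv, one_mulVec]
  have hsum_z : ∑ i, z i = ztilde + zN := by rw [hzt]; ring
  have hN0 : (N : ℝ) ≠ 0 := by linarith
  have hN1 : (N : ℝ) - 1 ≠ 0 := by linarith
  have hk : -(N : ℝ) * ((N : ℝ) - 1) ≠ 0 := mul_ne_zero (neg_ne_zero.mpr hN0) hN1
  have hp1 : p ⬝ᵥ 1 = 1 := by simp [hp, hN0]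
  have hq1 : q ⬝ᵥ 1 = 0 := by
    simp only [hq, Pi.one_apply, sum_const, card_univ, Fintype.card_fin, nsmul_eq_mul, mul_one]
    field_simp
    ring
  change ((1 - A)⁻¹ *ᵥ 1) ℓ = _
  rw [apply_eq_div_of_one_sub_mulVec_eq_one hApq hp1 hq1 hx, hp, hq, hsum_z, ← hzN,
    ← mul_div_mul_left _ _ hk]
  congr 1
  · field_simp
    ring
  · field_simp
    ring
end

section
/- Let A be the constant-column matrix a_{ij} = z_i/N with z_i ≥ 0 and z̄ < 1. Then the average of the upstreamness coefficients equals the common downstreamness coefficient: (1/N) ∑_ℓ [(I−A)⁻¹ 1]_ℓ = 1 + z̄/(1−z̄) = [(I−Aᵀ)⁻¹ 1]_k for every k. -/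
open Matrix Finset

/-! With `w = (1/N, …, 1/N)` the matrix is the rank-one `A = z wᵀ`, and `wᵀ z = z̄`, so
`A² = z̄ A`. Hence `(I - A)(I + A/(1 - z̄)) = I`, a special case of Sherman–Morrison, and likewise
for `Aᵀ = w zᵀ`. Applied to `1`, this gives upstreamness `1 + z_ℓ/(1 - z̄)`, whose mean is
`1 + z̄/(1 - z̄)`, and downstreamness `1 + (∑ z)/(N (1 - z̄)) = 1 + z̄/(1 - z̄)` in every entry. -/

namespace Matrix

variable {n K : Type*} [Fintype n] [DecidableEq n] [Field K]

theorem inv_one_sub_of_mul_self_eq_smul {A : Matrix n n K} {t : K} (hA : A * A = t • A)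
    (ht : t ≠ 1) : (1 - A)⁻¹ = 1 + (1 - t)⁻¹ • A := by
  apply inv_eq_right_inv
  have h1t : (1 - t)⁻¹ * (1 - t) = 1 := inv_mul_cancel₀ (sub_ne_zero.mpr ht.symm)
  calc (1 - A) * (1 + (1 - t)⁻¹ • A)
      = 1 + ((1 - t)⁻¹ - 1 - (1 - t)⁻¹ * t) • A := by
        rw [sub_mul, mul_add, mul_add, one_mul, mul_one, one_mul, mul_smul_comm, hA, smul_smul]
        module
    _ = 1 := by rw [show (1 - t)⁻¹ - 1 - (1 - t)⁻¹ * t = 0 by linear_combination h1t,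
        zero_smul, add_zero]

theorem inv_one_sub_vecMulVec {u v : n → K} (h : v ⬝ᵥ u ≠ 1) :
    (1 - vecMulVec u v)⁻¹ = 1 + (1 - v ⬝ᵥ u)⁻¹ • vecMulVec u v :=
  inv_one_sub_of_mul_self_eq_smul (by rw [vecMulVec_mul_vecMulVec, vecMulVec_smul]) h

theorem inv_one_sub_vecMulVec_mulVec {u v : n → K} (h : v ⬝ᵥ u ≠ 1) (x : n → K) :
    (1 - vecMulVec u v)⁻¹ *ᵥ x = x + ((1 - v ⬝ᵥ u)⁻¹ * (v ⬝ᵥ x)) • u := by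
  rw [inv_one_sub_vecMulVec h, add_mulVec, one_mulVec, smul_mulVec, vecMulVec_mulVec,
    op_smul_eq_smul, smul_smul]

end Matrix

theorem stmt_13_general (N : ℕ) (hN : 1 ≤ N) (z : Fin N → ℝ)
    (zbar : ℝ) (hzbar : zbar = (1 / (N : ℝ)) * ∑ i, z i) (hzbar1 : zbar < 1)
    (A : Matrix (Fin N) (Fin N) ℝ) (hA : ∀ i j, A i j = z i / (N : ℝ)) :
    (1 / (N : ℝ)) * ∑ ℓ, ((1 - A)⁻¹).mulVec (fun _ => (1 : ℝ)) ℓ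
        = 1 + zbar / (1 - zbar) ∧
    ∀ k : Fin N,
      ((1 - Aᵀ)⁻¹).mulVec (fun _ => (1 : ℝ)) k = 1 + zbar / (1 - zbar) := by
  set w : Fin N → ℝ := fun _ => 1 / N
  have hN0 : (N : ℝ) ≠ 0 := Nat.cast_ne_zero.mpr (by omega)
  have hArank : A = vecMulVec z w := by
    ext i j; rw [hA, vecMulVec_apply, div_eq_mul_one_div]
  have hwz : w ⬝ᵥ z = zbar := by rw [hzbar, dotProduct, ← mul_sum]
  have hzw : z ⬝ᵥ w = zbar := by rw [dotProduct_comm, hwz]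
  have hw1 : (w ⬝ᵥ fun _ => 1) = 1 := by simp [w, dotProduct, hN0]
  have hz1 : (z ⬝ᵥ fun _ => 1) = N * zbar := by simp [hzbar, dotProduct, hN0]
  refine ⟨?_, fun k => ?_⟩
  · rw [hArank, inv_one_sub_vecMulVec_mulVec (hwz ▸ hzbar1.ne), hwz, hw1]
    simp only [Pi.add_apply, Pi.smul_apply, smul_eq_mul, sum_add_distrib, ← mul_sum, sum_const,
      card_univ, Fintype.card_fin, nsmul_eq_mul, mul_one, hzbar]
    field_simp
  · rw [hArank, transpose_vecMulVec, inv_one_sub_vecMulVec_mulVec (hzw ▸ hzbar1.ne), hzw, hz1]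
    simp only [Pi.add_apply, Pi.smul_apply, smul_eq_mul, w]
    field_simp

theorem stmt_13 (N : ℕ) (hN : 1 ≤ N) (z : Fin N → ℝ) (hz : ∀ i, 0 ≤ z i)
    (zbar : ℝ) (hzbar : zbar = (1 / (N : ℝ)) * ∑ i, z i) (hzbar1 : zbar < 1)
    (A : Matrix (Fin N) (Fin N) ℝ) (hA : ∀ i j, A i j = z i / (N : ℝ)) :
    (1 / (N : ℝ)) * ∑ ℓ, ((1 - A)⁻¹).mulVec (fun _ => (1 : ℝ)) ℓ
        = 1 + zbar / (1 - zbar) ∧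
    ∀ k : Fin N,
      ((1 - Aᵀ)⁻¹).mulVec (fun _ => (1 : ℝ)) k = 1 + zbar / (1 - zbar) :=
  stmt_13_general N hN z zbar hzbar hzbar1 A hA
end
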